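/- Let p : ℝ → ℝ be a polynomial of degree at most 2 and for integers j ≥ 0, k ∈ ℤ let P_{j,k} := 2^j ∫_{2^{−j}k}^{2^{−j}(k+1)} p(x) dx denote its dyadic cell averages. Then the third-order prediction reproduces the fine cell averages exactly: P_{j+1,2k} = P_{j,k} + (1/8)(P_{j,k−1} − P_{j,k+1}) and P_{j+1,2k+1} = P_{j,k} + (1/8)(P_{j,k+1} − P_{j,k−1}) for all j ≥ 0 and k ∈ ℤ. -/

import Mathlib

/-!
A quadratic `q = c₀ + c₁ x + c₂ x²` has mean `c₀ + c₁ (a + h/2) + c₂ (a² + a h + h²/3)` over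
`[a, a + h]`. Both sides of each prediction formula are therefore explicit polynomials in
`a`, `h` and the coefficients, and they agree identically.
-/

open Polynomial

noncomputable def cellAverage (f : ℝ → ℝ) (a h : ℝ) : ℝ :=
  h⁻¹ * ∫ x in a..a + h, f x

theorem eval_eq_of_natDegree_le_two {p : ℝ[X]} (hp : p.natDegree ≤ 2) (x : ℝ) :
    p.eval x = p.coeff 0 + p.coeff 1 * x + p.coeff 2 * x ^ 2 := by
  rw [eval_eq_sum_range' (Nat.lt_succ_of_le hp)]
  simp [Finset.sum_range_succ]

theorem integral_quadratic (c₀ c₁ c₂ a b : ℝ) :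
    ∫ x in a..b, (c₀ + c₁ * x + c₂ * x ^ 2) =
      c₀ * (b - a) + c₁ * (b ^ 2 - a ^ 2) / 2 + c₂ * (b ^ 3 - a ^ 3) / 3 := by
  have I₀ : IntervalIntegrable (fun _ : ℝ => c₀) MeasureTheory.volume a b :=
    intervalIntegrable_const
  have I₁ : IntervalIntegrable (fun x : ℝ => c₁ * x) MeasureTheory.volume a b :=
    (continuous_const.mul continuous_id).intervalIntegrable a b
  have I₂ : IntervalIntegrable (fun x : ℝ => c₂ * x ^ 2) MeasureTheory.volume a b :=
    (continuous_const.mul (continuous_pow 2)).intervalIntegrable a b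
  rw [intervalIntegral.integral_add (I₀.add I₁) I₂, intervalIntegral.integral_add I₀ I₁,
    intervalIntegral.integral_const, intervalIntegral.integral_const_mul,
    intervalIntegral.integral_const_mul, integral_id, integral_pow, smul_eq_mul]
  ring

theorem cellAverage_eval_of_natDegree_le_two {p : ℝ[X]} (hp : p.natDegree ≤ 2) (a : ℝ) {h : ℝ}
    (hh : h ≠ 0) :
    cellAverage p.eval a h =
      p.coeff 0 + p.coeff 1 * (a + h / 2) + p.coeff 2 * (a ^ 2 + a * h + h ^ 2 / 3) := by
  simp only [cellAverage, eval_eq_of_natDegree_le_two hp, integral_quadratic]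
  field_simp
  ring

theorem cellAverage_left_half_of_natDegree_le_two {p : ℝ[X]} (hp : p.natDegree ≤ 2) (a : ℝ)
    {h : ℝ} (hh : h ≠ 0) :
    cellAverage p.eval a (h / 2) = cellAverage p.eval a h +
      1 / 8 * (cellAverage p.eval (a - h) h - cellAverage p.eval (a + h) h) := by
  simp only [cellAverage_eval_of_natDegree_le_two hp _ hh,
    cellAverage_eval_of_natDegree_le_two hp _ (div_ne_zero hh two_ne_zero)]
  ring

theorem cellAverage_right_half_of_natDegree_le_two {p : ℝ[X]} (hp : p.natDegree ≤ 2) (a : ℝ)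
    {h : ℝ} (hh : h ≠ 0) :
    cellAverage p.eval (a + h / 2) (h / 2) = cellAverage p.eval a h +
      1 / 8 * (cellAverage p.eval (a + h) h - cellAverage p.eval (a - h) h) := by
  simp only [cellAverage_eval_of_natDegree_le_two hp _ hh,
    cellAverage_eval_of_natDegree_le_two hp _ (div_ne_zero hh two_ne_zero)]
  ring

theorem dyadic_integral_eq_cellAverage (f : ℝ → ℝ) (j : ℕ) (k : ℤ) :
    2 ^ j * ∫ x in ((2:ℝ) ^ (-(j:ℤ)) * k)..((2:ℝ) ^ (-(j:ℤ)) * (k + 1)), f x =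
      cellAverage f (2 ^ (-(j:ℤ)) * k) (2 ^ (-(j:ℤ))) := by
  rw [cellAverage, zpow_neg, zpow_natCast, inv_inv, mul_add, mul_one]

/-- The third-order prediction operator reproduces exactly the dyadic cell
averages of any polynomial of degree at most 2. -/
theorem prediction_exact_for_quadratics
    (p : Polynomial ℝ) (hp : p.natDegree ≤ 2) (P : ℕ → ℤ → ℝ)
    (hP : ∀ (j : ℕ) (k : ℤ),
      P j k = 2 ^ j *
        ∫ x in ((2:ℝ) ^ (-(j:ℤ)) * k)..((2:ℝ) ^ (-(j:ℤ)) * (k + 1)), p.eval x) :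
    ∀ (j : ℕ) (k : ℤ),
      P (j + 1) (2 * k) = P j k + (1/8) * (P j (k - 1) - P j (k + 1)) ∧
      P (j + 1) (2 * k + 1) = P j k + (1/8) * (P j (k + 1) - P j (k - 1)) := by
  intro j k
  simp only [hP, dyadic_integral_eq_cellAverage]
  set h : ℝ := 2 ^ (-(j:ℤ))
  have hh : h ≠ 0 := by positivity
  have hfine : (2:ℝ) ^ (-((j:ℤ) + 1)) = h / 2 := by
    rw [neg_add, zpow_add₀ two_ne_zero, zpow_neg_one, div_eq_mul_inv]
  push_cast
  rw [hfine, show h / 2 * (2 * k) = h * k by ring, show h / 2 * (2 * k + 1) = h * k + h / 2 by ring,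
    mul_sub_one, mul_add_one]
  exact ⟨cellAverage_left_half_of_natDegree_le_two hp _ hh,
    cellAverage_right_half_of_natDegree_le_two hp _ hh⟩
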